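/- arXiv:2504.08223 — 7 statements merged into one kernel-verified Lean document; each statement's English description precedes it below -/
import Mathlib

section
/- Let (Ω, 𝔉, P) be a probability space, 𝒢 ⊆ 𝔉 a sub-σ-algebra, and let X, X′, V′ : Ω → ℝⁿ be 𝒢-measurable and square-integrable. Let S be a measurable space and ξ : Ω → S a random variable independent of 𝒢. Let g : ℝⁿ × S → ℝⁿ be measurable and G : ℝⁿ → ℝⁿ be such that for every x ∈ ℝⁿ: E[g(x, ξ)] = G(x) and E[‖g(x, ξ) − G(x)‖²] ≤ σ², and such that for every s ∈ S the map x ↦ g(x,s) is L-Lipschitz. Assume all the random vectors appearing below are square-integrable, and let a ∈ (0,1]. Then E[‖g(X, ξ) + (1−a)(V′ − g(X′, ξ)) − G(X)‖²] ≤ (1−a)²·E[‖V′ − G(X′)‖²] + 2a²σ² + 2L²(1−a)²·E[‖X − X′‖²]. -/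
open MeasureTheory ProbabilityTheory
open scoped InnerProductSpace

section Aux

variable {α E : Type*} [MeasurableSpace α] {μ : Measure α} [IsProbabilityMeasure μ]
  [NormedAddCommGroup E] [InnerProductSpace ℝ E] [CompleteSpace E]

lemma aux_expand (Y : α → E) (hY : MemLp Y 2 μ) (c : E) :
    ∫ s, ‖c + Y s‖ ^ 2 ∂μ = ‖c‖ ^ 2 + 2 * ⟪c, ∫ s, Y s ∂μ⟫_ℝ + ∫ s, ‖Y s‖ ^ 2 ∂μ := by
  have hYi : Integrable Y μ := hY.integrable (by norm_num)
  have hsq : Integrable (fun s => ‖Y s‖ ^ 2) μ := hY.norm.integrable_sq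
  have hin : Integrable (fun s => 2 * ⟪c, Y s⟫_ℝ) μ := (hYi.const_inner c).const_mul 2
  have h1 : ∀ s, ‖c + Y s‖ ^ 2 = ‖c‖ ^ 2 + (2 * ⟪c, Y s⟫_ℝ + ‖Y s‖ ^ 2) := by
    intro s
    rw [norm_add_sq_real]; ring
  rw [show (fun s => ‖c + Y s‖ ^ 2) = fun s => ‖c‖ ^ 2 + (2 * ⟪c, Y s⟫_ℝ + ‖Y s‖ ^ 2) from
    funext h1]
  have hin2 : Integrable (fun s => 2 * ⟪c, Y s⟫_ℝ + ‖Y s‖ ^ 2) μ := hin.add hsq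
  rw [MeasureTheory.integral_add (integrable_const _) hin2,
    MeasureTheory.integral_add hin hsq,
    integral_const, integral_const_mul, integral_inner hYi]
  simp [measure_univ]
  ring

lemma aux_mean_zero (Y : α → E) (hY : MemLp Y 2 μ) (h0 : ∫ s, Y s ∂μ = 0) (c : E) :
    ∫ s, ‖c + Y s‖ ^ 2 ∂μ = ‖c‖ ^ 2 + ∫ s, ‖Y s‖ ^ 2 ∂μ := by
  rw [aux_expand Y hY c, h0, inner_zero_right]; ring

lemma aux_var_le (W : α → E) (hW : MemLp W 2 μ) :
    ∫ s, ‖W s - ∫ t, W t ∂μ‖ ^ 2 ∂μ ≤ ∫ s, ‖W s‖ ^ 2 ∂μ := by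
  set m := ∫ t, W t ∂μ with hm
  rw [show (fun s => ‖W s - m‖ ^ 2) = fun s => ‖(-m) + W s‖ ^ 2 from
    funext fun s => by rw [show W s - m = -m + W s from by abel]]
  rw [aux_expand W hW (-m), ← hm]
  have h2 : ⟪-m, m⟫_ℝ = -(‖m‖ ^ 2) := by
    rw [inner_neg_left, real_inner_self_eq_norm_sq]
  rw [h2]
  simp only [norm_neg]
  nlinarith [sq_nonneg ‖m‖]

variable {S : Type*} [MeasurableSpace S]

lemma aux_pointwise {μ : Measure S} [IsProbabilityMeasure μ]
    (g : E → S → E) (G : E → E) (σ L a : ℝ) (ha0 : 0 < a) (ha1 : a ≤ 1) (hL : 0 ≤ L)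
    (hmg : ∀ x, MemLp (fun s => g x s) 2 μ)
    (hmean : ∀ x, ∫ s, g x s ∂μ = G x)
    (hvar : ∀ x, ∫ s, ‖g x s - G x‖ ^ 2 ∂μ ≤ σ ^ 2)
    (hlip : ∀ s x x', ‖g x s - g x' s‖ ≤ L * ‖x - x'‖)
    (x x' v' : E) :
    ∫ s, ‖g x s + (1 - a) • (v' - g x' s) - G x‖ ^ 2 ∂μ ≤
      (1 - a) ^ 2 * ‖v' - G x'‖ ^ 2 + 2 * a ^ 2 * σ ^ 2 +
        2 * L ^ 2 * (1 - a) ^ 2 * ‖x - x'‖ ^ 2 := by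
  set c : E := (1 - a) • (v' - G x') with hc
  set Y : S → E := fun s => (g x s - G x) - (1 - a) • (g x' s - G x') with hYdef
  set Z : S → E := fun s => (g x s - g x' s) - (G x - G x') with hZdef
  have hgi : ∀ y : E, Integrable (fun s => g y s) μ := fun y => (hmg y).integrable (by norm_num)
  have hei : ∀ y : E, Integrable (fun s => g y s - G y) μ :=
    fun y => (hgi y).sub (integrable_const _)
  have heim : ∀ y : E, MemLp (fun s => g y s - G y) 2 μ :=
    fun y => (hmg y).sub (memLp_const _)
  have hYm : MemLp Y 2 μ := (heim x).sub ((heim x').const_smul (1 - a))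
  have hZm : MemLp Z 2 μ := ((hmg x).sub (hmg x')).sub (memLp_const _)
  have he0 : ∀ y : E, ∫ s, (g y s - G y) ∂μ = 0 := by
    intro y
    rw [integral_sub (hgi y) (integrable_const _), hmean, integral_const]
    simp [measure_univ]
  have hsmuli : Integrable (fun s => (1 - a) • (g x' s - G x')) μ :=
    (hei x').smul (1 - a)
  have hY0 : ∫ s, Y s ∂μ = 0 := by
    simp only [hYdef]
    rw [integral_sub (hei x) hsmuli, he0 x,
      integral_smul, he0 x', smul_zero, sub_zero]
  have hrw : (fun s => ‖g x s + (1 - a) • (v' - g x' s) - G x‖ ^ 2)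
      = fun s => ‖c + Y s‖ ^ 2 := by
    funext s
    have h : g x s + (1 - a) • (v' - g x' s) - G x = c + Y s := by
      simp only [hc, hYdef]; module
    rw [h]
  rw [hrw, aux_mean_zero Y hYm hY0 c]
  -- bound ‖c‖^2
  have hcnorm : ‖c‖ ^ 2 = (1 - a) ^ 2 * ‖v' - G x'‖ ^ 2 := by
    rw [hc, norm_smul, Real.norm_eq_abs, abs_of_nonneg (by linarith), mul_pow]
  -- pointwise bound on ‖Y s‖^2
  have hptw : ∀ s, ‖Y s‖ ^ 2 ≤
      2 * a ^ 2 * ‖g x s - G x‖ ^ 2 + 2 * (1 - a) ^ 2 * ‖Z s‖ ^ 2 := by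
    intro s
    have hdec : Y s = a • (g x s - G x) + (1 - a) • Z s := by
      simp only [hYdef, hZdef]; module
    rw [hdec]
    have t1 := norm_add_le (a • (g x s - G x)) ((1 - a) • Z s)
    have e1 : ‖a • (g x s - G x)‖ = a * ‖g x s - G x‖ := by
      rw [norm_smul, Real.norm_eq_abs, abs_of_nonneg ha0.le]
    have e2 : ‖(1 - a) • Z s‖ = (1 - a) * ‖Z s‖ := by
      rw [norm_smul, Real.norm_eq_abs, abs_of_nonneg (by linarith)]
    rw [e1, e2] at t1
    have t2 : ‖a • (g x s - G x) + (1 - a) • Z s‖ ^ 2 ≤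
        (a * ‖g x s - G x‖ + (1 - a) * ‖Z s‖) ^ 2 :=
      pow_le_pow_left₀ (norm_nonneg _) t1 2
    nlinarith [sq_nonneg (a * ‖g x s - G x‖ - (1 - a) * ‖Z s‖)]
  -- integral bound on Z
  have hZbound : ∫ s, ‖Z s‖ ^ 2 ∂μ ≤ L ^ 2 * ‖x - x'‖ ^ 2 := by
    have hWm : MemLp (fun s => g x s - g x' s) 2 μ := (hmg x).sub (hmg x')
    have hWmean : ∫ s, (g x s - g x' s) ∂μ = G x - G x' := by
      rw [integral_sub (hgi x) (hgi x'), hmean, hmean]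
    have h2 := aux_var_le _ hWm
    rw [hWmean] at h2
    refine h2.trans ?_
    have h3 : ∫ s, ‖g x s - g x' s‖ ^ 2 ∂μ ≤ ∫ _s, (L * ‖x - x'‖) ^ 2 ∂μ := by
      refine integral_mono hWm.norm.integrable_sq (integrable_const _) fun s => ?_
      exact pow_le_pow_left₀ (norm_nonneg _) (hlip s x x') 2
    rw [integral_const] at h3
    simp only [probReal_univ, smul_eq_mul, one_mul] at h3
    calc ∫ s, ‖g x s - g x' s‖ ^ 2 ∂μ ≤ (L * ‖x - x'‖) ^ 2 := h3
      _ = L ^ 2 * ‖x - x'‖ ^ 2 := by ring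
  -- integral bound on Y
  have hYbound : ∫ s, ‖Y s‖ ^ 2 ∂μ ≤ 2 * a ^ 2 * σ ^ 2 + 2 * (1 - a) ^ 2 * (L ^ 2 * ‖x - x'‖ ^ 2) := by
    have hi1 : Integrable (fun s => 2 * a ^ 2 * ‖g x s - G x‖ ^ 2) μ :=
      ((heim x).norm.integrable_sq).const_mul _
    have hi2 : Integrable (fun s => 2 * (1 - a) ^ 2 * ‖Z s‖ ^ 2) μ :=
      (hZm.norm.integrable_sq).const_mul _
    have step1 : ∫ s, ‖Y s‖ ^ 2 ∂μ ≤
        ∫ s, (2 * a ^ 2 * ‖g x s - G x‖ ^ 2 + 2 * (1 - a) ^ 2 * ‖Z s‖ ^ 2) ∂μ :=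
      integral_mono hYm.norm.integrable_sq (hi1.add hi2) hptw
    have step2 : ∫ s, (2 * a ^ 2 * ‖g x s - G x‖ ^ 2 + 2 * (1 - a) ^ 2 * ‖Z s‖ ^ 2) ∂μ
        = 2 * a ^ 2 * ∫ s, ‖g x s - G x‖ ^ 2 ∂μ + 2 * (1 - a) ^ 2 * ∫ s, ‖Z s‖ ^ 2 ∂μ := by
      rw [MeasureTheory.integral_add hi1 hi2, integral_const_mul, integral_const_mul]
    refine (step1.trans_eq step2).trans ?_
    have h4 : 2 * a ^ 2 * ∫ s, ‖g x s - G x‖ ^ 2 ∂μ ≤ 2 * a ^ 2 * σ ^ 2 := by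
      apply mul_le_mul_of_nonneg_left (hvar x) (by positivity)
    have h5 : 2 * (1 - a) ^ 2 * ∫ s, ‖Z s‖ ^ 2 ∂μ ≤ 2 * (1 - a) ^ 2 * (L ^ 2 * ‖x - x'‖ ^ 2) :=
      mul_le_mul_of_nonneg_left hZbound (by positivity)
    linarith
  rw [hcnorm]
  nlinarith [hYbound]

end Aux

lemma aux_main {Ω : Type*} [m0 : MeasurableSpace Ω] (P : Measure Ω) [IsProbabilityMeasure P]
    {n : ℕ} (X X' V' : Ω → EuclideanSpace ℝ (Fin n))
    (hXm : Measurable X) (hX'm : Measurable X') (hV'm : Measurable V')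
    (hX2 : MemLp X 2 P) (hX'2 : MemLp X' 2 P) (hV'2 : MemLp V' 2 P)
    {S : Type*} [MeasurableSpace S] (ξ : Ω → S) (hξm : Measurable ξ)
    (g : EuclideanSpace ℝ (Fin n) → S → EuclideanSpace ℝ (Fin n))
    (hg : Measurable (fun q : EuclideanSpace ℝ (Fin n) × S => g q.1 q.2))
    (G : EuclideanSpace ℝ (Fin n) → EuclideanSpace ℝ (Fin n))
    (σ L : ℝ) (hσ : 0 ≤ σ) (hL : 0 ≤ L)
    (hmean : ∀ x, ∫ ω, g x (ξ ω) ∂P = G x)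
    (hvar : ∀ x, ∫ ω, ‖g x (ξ ω) - G x‖ ^ 2 ∂P ≤ σ ^ 2)
    (hlip : ∀ s x x', ‖g x s - g x' s‖ ≤ L * ‖x - x'‖)
    (hsq1 : MemLp (fun ω => g (X ω) (ξ ω)) 2 P)
    (hsq2 : MemLp (fun ω => g (X' ω) (ξ ω)) 2 P)
    (hGX : MemLp (fun ω => G (X ω)) 2 P) (hGX' : MemLp (fun ω => G (X' ω)) 2 P)
    (a : ℝ) (ha : a ∈ Set.Ioc (0 : ℝ) 1)
    (hTξ0 : IndepFun (fun ω => (X ω, X' ω, V' ω)) ξ P) :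
    ∫ ω, ‖g (X ω) (ξ ω) + (1 - a) • (V' ω - g (X' ω) (ξ ω)) - G (X ω)‖ ^ 2 ∂P ≤
      (1 - a) ^ 2 * ∫ ω, ‖V' ω - G (X' ω)‖ ^ 2 ∂P + 2 * a ^ 2 * σ ^ 2 +
        2 * L ^ 2 * (1 - a) ^ 2 * ∫ ω, ‖X ω - X' ω‖ ^ 2 ∂P := by
  obtain ⟨ha0, ha1⟩ := ha
  -- measurability of X, X', V' wrt m0
  -- each g x ∘ ξ is MemLp 2
  have hgxm : ∀ x : EuclideanSpace ℝ (Fin n), Measurable fun ω => g x (ξ ω) :=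
    fun x => hg.comp (measurable_const.prodMk hξm)
  have hgx : ∀ x : EuclideanSpace ℝ (Fin n), MemLp (fun ω => g x (ξ ω)) 2 P := by
    intro x
    have hdom : MemLp (fun ω => ‖g (X ω) (ξ ω)‖ + (L * ‖x‖ + L * ‖X ω‖)) 2 P :=
      hsq1.norm.add ((memLp_const (L * ‖x‖)).add (hX2.norm.const_mul L))
    refine hdom.of_le (hgxm x).aestronglyMeasurable ?_
    filter_upwards with ω
    have h1 := hlip (ξ ω) x (X ω)
    have h2 : ‖g x (ξ ω)‖ ≤ ‖g (X ω) (ξ ω)‖ + ‖g x (ξ ω) - g (X ω) (ξ ω)‖ := by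
      have := norm_add_le (g (X ω) (ξ ω)) (g x (ξ ω) - g (X ω) (ξ ω))
      simpa using this
    have h3 : ‖x - X ω‖ ≤ ‖x‖ + ‖X ω‖ := norm_sub_le _ _
    have h4 : ‖g x (ξ ω)‖ ≤ ‖g (X ω) (ξ ω)‖ + (L * ‖x‖ + L * ‖X ω‖) := by
      nlinarith
    refine h4.trans (le_abs_self _)
  have hgxi : ∀ x : EuclideanSpace ℝ (Fin n), Integrable (fun ω => g x (ξ ω)) P :=
    fun x => (hgx x).integrable (by norm_num)
  -- G is Lipschitz hence continuous, measurable
  have hGlipd : ∀ x y : EuclideanSpace ℝ (Fin n), dist (G x) (G y) ≤ L * dist x y := by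
    intro x y
    rw [dist_eq_norm, dist_eq_norm]
    have h1 : G x - G y = ∫ ω, (g x (ξ ω) - g y (ξ ω)) ∂P := by
      rw [integral_sub (hgxi x) (hgxi y), hmean, hmean]
    rw [h1]
    calc ‖∫ ω, (g x (ξ ω) - g y (ξ ω)) ∂P‖ ≤ ∫ ω, ‖g x (ξ ω) - g y (ξ ω)‖ ∂P :=
          norm_integral_le_integral_norm _
      _ ≤ ∫ _ω, L * ‖x - y‖ ∂P := by
          refine integral_mono ((hgxi x).sub (hgxi y)).norm (integrable_const _)
            fun ω => hlip (ξ ω) x y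
      _ = L * ‖x - y‖ := by rw [integral_const]; simp [measure_univ]
  have hGcont : Continuous G :=
    (LipschitzWith.of_dist_le_mul (K := ⟨L, hL⟩) (by exact_mod_cast hGlipd)).continuous
  have hGmeas : Measurable G := hGcont.measurable
  -- the pair (T, ξ)
  set T : Ω → EuclideanSpace ℝ (Fin n) × EuclideanSpace ℝ (Fin n) × EuclideanSpace ℝ (Fin n) := fun ω => (X ω, X' ω, V' ω) with hTdef
  have hTm : Measurable T := hXm.prodMk (hX'm.prodMk hV'm)
  have hTξ : IndepFun T ξ P := by
    have := hTξ0
    rwa [hTdef]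
  have hmap : P.map (fun ω => (T ω, ξ ω)) = (P.map T).prod (P.map ξ) :=
    (indepFun_iff_map_prod_eq_prod_map_map hTm.aemeasurable hξm.aemeasurable).mp hTξ
  set ν := P.map T with hνdef
  set μ := P.map ξ with hμdef
  haveI : IsProbabilityMeasure ν := Measure.isProbabilityMeasure_map hTm.aemeasurable
  haveI : IsProbabilityMeasure μ := Measure.isProbabilityMeasure_map hξm.aemeasurable
  -- φ
  set φ : (EuclideanSpace ℝ (Fin n) × EuclideanSpace ℝ (Fin n) × EuclideanSpace ℝ (Fin n)) × S → ℝ :=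
    fun p => ‖g p.1.1 p.2 + (1 - a) • (p.1.2.2 - g p.1.2.1 p.2) - G p.1.1‖ ^ 2 with hφdef
  have hφm : Measurable φ := by
    apply Measurable.pow_const
    apply Measurable.norm
    have hg1 : Measurable fun p : (EuclideanSpace ℝ (Fin n) × EuclideanSpace ℝ (Fin n) × EuclideanSpace ℝ (Fin n)) × S => g p.1.1 p.2 :=
      hg.comp (measurable_fst.fst.prodMk measurable_snd)
    have hg2 : Measurable fun p : (EuclideanSpace ℝ (Fin n) × EuclideanSpace ℝ (Fin n) × EuclideanSpace ℝ (Fin n)) × S => g p.1.2.1 p.2 :=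
      hg.comp (measurable_fst.snd.fst.prodMk measurable_snd)
    exact ((hg1.add ((measurable_fst.snd.snd.sub hg2).const_smul (1 - a))).sub
      (hGmeas.comp measurable_fst.fst))
  -- integrability of the composed function
  have hWP : MemLp (fun ω => g (X ω) (ξ ω) + (1 - a) • (V' ω - g (X' ω) (ξ ω)) - G (X ω)) 2 P :=
    (hsq1.add ((hV'2.sub hsq2).const_smul (1 - a))).sub hGX
  have hcomp : Integrable (fun ω => φ (T ω, ξ ω)) P := hWP.norm.integrable_sq
  have hφint : Integrable φ (ν.prod μ) := by
    rw [hνdef, hμdef, ← hmap]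
    exact (integrable_map_measure hφm.aestronglyMeasurable
      (hTm.prodMk hξm).aemeasurable).mpr hcomp
  -- Step A: LHS as iterated integral
  have stepA : ∫ ω, ‖g (X ω) (ξ ω) + (1 - a) • (V' ω - g (X' ω) (ξ ω)) - G (X ω)‖ ^ 2 ∂P
      = ∫ t, ∫ s, φ (t, s) ∂μ ∂ν := by
    have h1 : ∫ ω, ‖g (X ω) (ξ ω) + (1 - a) • (V' ω - g (X' ω) (ξ ω)) - G (X ω)‖ ^ 2 ∂P
        = ∫ ω, φ (T ω, ξ ω) ∂P := rfl
    rw [h1, ← integral_map (hTm.prodMk hξm).aemeasurable hφm.aestronglyMeasurable,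
      hmap, MeasureTheory.integral_prod φ hφint]
  -- transfer hypotheses to μ
  have hmx : ∀ x : EuclideanSpace ℝ (Fin n), Measurable fun s : S => g x s :=
    fun x => hg.comp (measurable_const.prodMk measurable_id)
  have hmgμ : ∀ x : EuclideanSpace ℝ (Fin n), MemLp (fun s => g x s) 2 μ := by
    intro x
    rw [hμdef]
    exact (memLp_map_measure_iff (hmx x).aestronglyMeasurable hξm.aemeasurable).mpr (hgx x)
  have hmeanμ : ∀ x : EuclideanSpace ℝ (Fin n), ∫ s, g x s ∂μ = G x := by
    intro x
    rw [hμdef, integral_map hξm.aemeasurable (hmx x).aestronglyMeasurable]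
    exact hmean x
  have hvarμ : ∀ x : EuclideanSpace ℝ (Fin n), ∫ s, ‖g x s - G x‖ ^ 2 ∂μ ≤ σ ^ 2 := by
    intro x
    have hm2 : Measurable fun s : S => ‖g x s - G x‖ ^ 2 :=
      ((hmx x).sub measurable_const).norm.pow_const 2
    rw [hμdef, integral_map hξm.aemeasurable hm2.aestronglyMeasurable]
    exact hvar x
  -- Step B: pointwise bound
  set bd : EuclideanSpace ℝ (Fin n) × EuclideanSpace ℝ (Fin n) × EuclideanSpace ℝ (Fin n) → ℝ := fun t =>
    (1 - a) ^ 2 * ‖t.2.2 - G t.2.1‖ ^ 2 + 2 * a ^ 2 * σ ^ 2 +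
      2 * L ^ 2 * (1 - a) ^ 2 * ‖t.1 - t.2.1‖ ^ 2 with hbddef
  have stepB : ∀ t : EuclideanSpace ℝ (Fin n) × EuclideanSpace ℝ (Fin n) × EuclideanSpace ℝ (Fin n), ∫ s, φ (t, s) ∂μ ≤ bd t := by
    intro t
    exact aux_pointwise g G σ L a ha0 ha1 hL hmgμ hmeanμ hvarμ hlip t.1 t.2.1 t.2.2
  -- integrability of bd over ν
  have hb1m : Measurable fun t : EuclideanSpace ℝ (Fin n) × EuclideanSpace ℝ (Fin n) × EuclideanSpace ℝ (Fin n) => t.2.2 - G t.2.1 :=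
    measurable_snd.snd.sub (hGmeas.comp measurable_snd.fst)
  have hb2m : Measurable fun t : EuclideanSpace ℝ (Fin n) × EuclideanSpace ℝ (Fin n) × EuclideanSpace ℝ (Fin n) => t.1 - t.2.1 :=
    measurable_fst.sub measurable_snd.fst
  have hbd1 : MemLp (fun t : EuclideanSpace ℝ (Fin n) × EuclideanSpace ℝ (Fin n) × EuclideanSpace ℝ (Fin n) => t.2.2 - G t.2.1) 2 ν := by
    rw [hνdef]
    exact (memLp_map_measure_iff hb1m.aestronglyMeasurable hTm.aemeasurable).mpr (hV'2.sub hGX')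
  have hbd2 : MemLp (fun t : EuclideanSpace ℝ (Fin n) × EuclideanSpace ℝ (Fin n) × EuclideanSpace ℝ (Fin n) => t.1 - t.2.1) 2 ν := by
    rw [hνdef]
    exact (memLp_map_measure_iff hb2m.aestronglyMeasurable hTm.aemeasurable).mpr (hX2.sub hX'2)
  have hbdint : Integrable bd ν := by
    refine Integrable.add (Integrable.add ?_ (integrable_const _)) ?_
    · exact (hbd1.norm.integrable_sq).const_mul _
    · exact (hbd2.norm.integrable_sq).const_mul _
  -- Step C
  have stepC : ∫ t, ∫ s, φ (t, s) ∂μ ∂ν ≤ ∫ t, bd t ∂ν := by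
    refine integral_mono ?_ hbdint stepB
    exact hφint.integral_prod_left
  -- compute ∫ bd dν
  have hbdν : ∫ t, bd t ∂ν =
      (1 - a) ^ 2 * ∫ ω, ‖V' ω - G (X' ω)‖ ^ 2 ∂P + 2 * a ^ 2 * σ ^ 2 +
        2 * L ^ 2 * (1 - a) ^ 2 * ∫ ω, ‖X ω - X' ω‖ ^ 2 ∂P := by
    have hbdmeas : Measurable bd := by
      apply Measurable.add
      apply Measurable.add
      · exact ((measurable_snd.snd.sub (hGmeas.comp measurable_snd.fst)).norm.pow_const 2).const_mul _
      · exact measurable_const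
      · exact ((measurable_fst.sub measurable_snd.fst).norm.pow_const 2).const_mul _
    rw [hνdef, integral_map hTm.aemeasurable hbdmeas.aestronglyMeasurable]
    have hi1 : Integrable (fun ω => (1 - a) ^ 2 * ‖V' ω - G (X' ω)‖ ^ 2) P :=
      ((hV'2.sub hGX').norm.integrable_sq).const_mul _
    have hi2 : Integrable (fun ω => 2 * L ^ 2 * (1 - a) ^ 2 * ‖X ω - X' ω‖ ^ 2) P :=
      ((hX2.sub hX'2).norm.integrable_sq).const_mul _
    have hi12 : Integrable (fun ω =>
        (1 - a) ^ 2 * ‖V' ω - G (X' ω)‖ ^ 2 + 2 * a ^ 2 * σ ^ 2) P :=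
      hi1.add (integrable_const _)
    have : (fun ω => bd (T ω)) = fun ω =>
        ((1 - a) ^ 2 * ‖V' ω - G (X' ω)‖ ^ 2 + 2 * a ^ 2 * σ ^ 2) +
          2 * L ^ 2 * (1 - a) ^ 2 * ‖X ω - X' ω‖ ^ 2 := rfl
    rw [this, MeasureTheory.integral_add hi12 hi2,
      MeasureTheory.integral_add hi1 (integrable_const _),
      integral_const_mul, integral_const_mul, integral_const_mul, integral_const]
    simp [measure_univ]
  rw [stepA, ← hbdν]
  exact stepC

theorem stmt_1 {Ω : Type*} (𝒢 : MeasurableSpace Ω) [m0 : MeasurableSpace Ω] (P : Measure Ω) [IsProbabilityMeasure P]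
    (h𝒢 : 𝒢 ≤ m0)
    {n : ℕ} (X X' V' : Ω → EuclideanSpace ℝ (Fin n))
    (hX : Measurable[𝒢] X) (hX' : Measurable[𝒢] X') (hV' : Measurable[𝒢] V')
    (hX2 : MemLp X 2 P) (hX'2 : MemLp X' 2 P) (hV'2 : MemLp V' 2 P)
    {S : Type*} [MeasurableSpace S] (ξ : Ω → S) (hξ : Measurable ξ)
    (hindep : Indep 𝒢 (MeasurableSpace.comap ξ inferInstance) P)
    (g : EuclideanSpace ℝ (Fin n) → S → EuclideanSpace ℝ (Fin n))
    (hg : Measurable (fun q : EuclideanSpace ℝ (Fin n) × S => g q.1 q.2))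
    (G : EuclideanSpace ℝ (Fin n) → EuclideanSpace ℝ (Fin n))
    (σ L : ℝ) (hσ : 0 ≤ σ) (hL : 0 ≤ L)
    (hmean : ∀ x, ∫ ω, g x (ξ ω) ∂P = G x)
    (hvar : ∀ x, ∫ ω, ‖g x (ξ ω) - G x‖ ^ 2 ∂P ≤ σ ^ 2)
    (hlip : ∀ s x x', ‖g x s - g x' s‖ ≤ L * ‖x - x'‖)
    (hsq1 : MemLp (fun ω => g (X ω) (ξ ω)) 2 P)
    (hsq2 : MemLp (fun ω => g (X' ω) (ξ ω)) 2 P)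
    (hGX : MemLp (fun ω => G (X ω)) 2 P) (hGX' : MemLp (fun ω => G (X' ω)) 2 P)
    (a : ℝ) (ha : a ∈ Set.Ioc (0 : ℝ) 1) :
    ∫ ω, ‖g (X ω) (ξ ω) + (1 - a) • (V' ω - g (X' ω) (ξ ω)) - G (X ω)‖ ^ 2 ∂P ≤
      (1 - a) ^ 2 * ∫ ω, ‖V' ω - G (X' ω)‖ ^ 2 ∂P + 2 * a ^ 2 * σ ^ 2 +
        2 * L ^ 2 * (1 - a) ^ 2 * ∫ ω, ‖X ω - X' ω‖ ^ 2 ∂P := by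
  have hTG : Measurable[𝒢] fun ω => (X ω, X' ω, V' ω) := hX.prodMk (hX'.prodMk hV')
  have hTξ : IndepFun (fun ω => (X ω, X' ω, V' ω)) ξ P := by
    refine (IndepFun_iff_Indep _ _ P).mpr ?_
    rw [ProbabilityTheory.Indep_iff _ _ P] at hindep ⊢
    intro t1 t2 ht1 ht2
    exact hindep t1 t2 (measurable_iff_comap_le.mp hTG t1 ht1) ht2
  exact aux_main (m0 := m0) P X X' V' (hX.mono h𝒢 le_rfl) (hX'.mono h𝒢 le_rfl) (hV'.mono h𝒢 le_rfl)
    hX2 hX'2 hV'2 ξ hξ g hg G σ L hσ hL hmean hvar hlip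
    hsq1 hsq2 hGX hGX' a ha hTξ
end

section
/- Let A ∈ ℝ^{p×n}, Q ∈ ℝ^{n×n}, L ≥ 0, σ_A > 0 and φ_max ≥ 0 be such that σ_A‖z‖² ≤ ‖Aᵀz‖² for all z ∈ ℝᵖ and ‖Qw‖ ≤ φ_max‖w‖ for all w ∈ ℝⁿ. Let G : ℝⁿ → ℝⁿ be L-Lipschitz. Suppose x′, x, x₊ ∈ ℝⁿ, v′, v ∈ ℝⁿ, λ, λ₊ ∈ ℝᵖ and η, η′ > 0 satisfy the stationarity relations Aᵀλ₊ = v − ηQ(x − x₊) and Aᵀλ = v′ − η′Q(x′ − x). Then ‖λ₊ − λ‖² ≤ (5/σ_A)·[ ‖v − G(x)‖² + ‖v′ − G(x′)‖² + η²φ_max²‖x − x₊‖² + (L² + η′²φ_max²)‖x′ − x‖² ]. -/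
/-!
Subtracting the two stationarity relations and inserting `± G x, ± G x'` writes `Aᵀ (λ₊ - λ)` as a
sum of five vectors: the two gradient errors, `G x - G x'`, and the two proximal terms
`η Q (x - x₊)`, `η' Q (x' - x)`. Bounding the square of a sum of five norms by five times the sum of
their squares, and then `‖λ₊ - λ‖²` by `‖Aᵀ (λ₊ - λ)‖² / σ_A`, gives the estimate.
-/

open Matrix

/-- The action of a real matrix on Euclidean space. -/
noncomputable def mvec {m n : ℕ} (A : Matrix (Fin m) (Fin n) ℝ)
    (x : EuclideanSpace ℝ (Fin n)) : EuclideanSpace ℝ (Fin m) :=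
  (WithLp.equiv 2 (Fin m → ℝ)).symm (A.mulVec ((WithLp.equiv 2 (Fin n → ℝ)) x))

theorem mvec_sub {m n : ℕ} (A : Matrix (Fin m) (Fin n) ℝ) (y z : EuclideanSpace ℝ (Fin n)) :
    mvec A (y - z) = mvec A y - mvec A z := by
  simp [mvec, Matrix.mulVec_sub]

theorem add_sq_le_five_mul_sum_sq (a b c d e : ℝ) :
    (a + b + c + d + e) ^ 2 ≤ 5 * (a ^ 2 + b ^ 2 + c ^ 2 + d ^ 2 + e ^ 2) := by
  nlinarith [sq_nonneg (a - b), sq_nonneg (a - c), sq_nonneg (a - d), sq_nonneg (a - e),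
    sq_nonneg (b - c), sq_nonneg (b - d), sq_nonneg (b - e), sq_nonneg (c - d),
    sq_nonneg (c - e), sq_nonneg (d - e)]

theorem norm_add_sq_le_five_mul_sum_sq {E : Type*} [SeminormedAddCommGroup E] (a b c d e : E) :
    ‖a + b + c + d + e‖ ^ 2 ≤ 5 * (‖a‖ ^ 2 + ‖b‖ ^ 2 + ‖c‖ ^ 2 + ‖d‖ ^ 2 + ‖e‖ ^ 2) := by
  have h : ‖a + b + c + d + e‖ ≤ ‖a‖ + ‖b‖ + ‖c‖ + ‖d‖ + ‖e‖ :=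
    (norm_add_le _ _).trans (add_le_add_left norm_add₄_le _)
  exact (pow_le_pow_left₀ (norm_nonneg _) h 2).trans (add_sq_le_five_mul_sum_sq _ _ _ _ _)

theorem sq_norm_le_of_norm_le_mul {E F : Type*} [SeminormedAddCommGroup E]
    [SeminormedAddCommGroup F] {u : E} {w : F} {c : ℝ} (h : ‖u‖ ≤ c * ‖w‖) :
    ‖u‖ ^ 2 ≤ c ^ 2 * ‖w‖ ^ 2 := by
  rw [← mul_pow]
  exact pow_le_pow_left₀ (norm_nonneg _) h 2

theorem sq_norm_smul_le_of_norm_le_mul {E F : Type*} [SeminormedAddCommGroup E] [NormedSpace ℝ E]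
    [SeminormedAddCommGroup F] {u : E} {w : F} {c : ℝ} (h : ‖u‖ ≤ c * ‖w‖) (η : ℝ) :
    ‖η • u‖ ^ 2 ≤ η ^ 2 * c ^ 2 * ‖w‖ ^ 2 := by
  have hη : ‖η • u‖ ≤ (|η| * c) * ‖w‖ := by
    rw [norm_smul, Real.norm_eq_abs, mul_assoc]
    exact mul_le_mul_of_nonneg_left h (abs_nonneg η)
  simpa only [mul_pow, sq_abs] using sq_norm_le_of_norm_le_mul hη

theorem stmt_3_general {p n : ℕ} (A : Matrix (Fin p) (Fin n) ℝ) (Q : Matrix (Fin n) (Fin n) ℝ)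
    (L σA φmax : ℝ) (hσA : 0 < σA)
    (hA : ∀ z : EuclideanSpace ℝ (Fin p), σA * ‖z‖ ^ 2 ≤ ‖mvec Aᵀ z‖ ^ 2)
    (hQ : ∀ w : EuclideanSpace ℝ (Fin n), ‖mvec Q w‖ ≤ φmax * ‖w‖)
    (G : EuclideanSpace ℝ (Fin n) → EuclideanSpace ℝ (Fin n))
    (hG : ∀ x x', ‖G x - G x'‖ ≤ L * ‖x - x'‖)
    (x' x xp v' v : EuclideanSpace ℝ (Fin n)) (lam lamp : EuclideanSpace ℝ (Fin p))
    (η η' : ℝ)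
    (h1 : mvec Aᵀ lamp = v - η • mvec Q (x - xp))
    (h2 : mvec Aᵀ lam = v' - η' • mvec Q (x' - x)) :
    ‖lamp - lam‖ ^ 2 ≤ (5 / σA) *
      (‖v - G x‖ ^ 2 + ‖v' - G x'‖ ^ 2 + η ^ 2 * φmax ^ 2 * ‖x - xp‖ ^ 2 +
        (L ^ 2 + η' ^ 2 * φmax ^ 2) * ‖x' - x‖ ^ 2) := by
  have hdiff : mvec Aᵀ (lamp - lam) = (v - G x) + (G x' - v') + (G x - G x')
      + (-η) • mvec Q (x - xp) + η' • mvec Q (x' - x) := by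
    rw [mvec_sub, h1, h2, neg_smul]
    abel
  have hG' : ‖G x - G x'‖ ^ 2 ≤ L ^ 2 * ‖x' - x‖ ^ 2 :=
    sq_norm_le_of_norm_le_mul (norm_sub_rev x' x ▸ hG x x')
  have hsum := norm_add_sq_le_five_mul_sum_sq (v - G x) (G x' - v') (G x - G x')
    ((-η) • mvec Q (x - xp)) (η' • mvec Q (x' - x))
  rw [← hdiff, norm_sub_rev (G x') v'] at hsum
  have hηQ := sq_norm_smul_le_of_norm_le_mul (hQ (x - xp)) (-η)
  have hη'Q := sq_norm_smul_le_of_norm_le_mul (hQ (x' - x)) η'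
  rw [neg_sq] at hηQ
  rw [div_mul_eq_mul_div, le_div_iff₀ hσA]
  linear_combination hA (lamp - lam) + hsum + 5 * hG' + 5 * hηQ + 5 * hη'Q

theorem stmt_3 {p n : ℕ} (A : Matrix (Fin p) (Fin n) ℝ) (Q : Matrix (Fin n) (Fin n) ℝ)
    (L σA φmax : ℝ) (hL : 0 ≤ L) (hσA : 0 < σA) (hφ : 0 ≤ φmax)
    (hA : ∀ z : EuclideanSpace ℝ (Fin p), σA * ‖z‖ ^ 2 ≤ ‖mvec Aᵀ z‖ ^ 2)
    (hQ : ∀ w : EuclideanSpace ℝ (Fin n), ‖mvec Q w‖ ≤ φmax * ‖w‖)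
    (G : EuclideanSpace ℝ (Fin n) → EuclideanSpace ℝ (Fin n))
    (hG : ∀ x x', ‖G x - G x'‖ ≤ L * ‖x - x'‖)
    (x' x xp v' v : EuclideanSpace ℝ (Fin n)) (lam lamp : EuclideanSpace ℝ (Fin p))
    (η η' : ℝ) (hη : 0 < η) (hη' : 0 < η')
    (h1 : mvec Aᵀ lamp = v - η • mvec Q (x - xp))
    (h2 : mvec Aᵀ lam = v' - η' • mvec Q (x' - x)) :
    ‖lamp - lam‖ ^ 2 ≤ (5 / σA) *
      (‖v - G x‖ ^ 2 + ‖v' - G x'‖ ^ 2 + η ^ 2 * φmax ^ 2 * ‖x - xp‖ ^ 2 +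
        (L ^ 2 + η' ^ 2 * φmax ^ 2) * ‖x' - x‖ ^ 2) :=
  stmt_3_general A Q L σA φmax hσA hA hQ G hG x' x xp v' v lam lamp η η' h1 h2
end

section
/- For F : ℝⁿ → ℝ, h : ℝᵈ → ℝ with h convex, matrices A ∈ ℝ^{p×n}, B ∈ ℝ^{p×d}, c ∈ ℝᵖ and ρ > 0, let L_ρ(x,y,λ) = F(x) + h(y) − ⟨λ, Ax + By − c⟩ + (ρ/2)‖Ax + By − c‖². Let H ∈ ℝ^{d×d} be symmetric with s_H‖w‖² ≤ ⟨w, Hw⟩ for all w ∈ ℝᵈ, where s_H > 0. Fix x ∈ ℝⁿ, λ ∈ ℝᵖ, y₀ ∈ ℝᵈ, and suppose y₊ ∈ ℝᵈ is a global minimizer over ℝᵈ of the function y ↦ L_ρ(x, y, λ) + (1/2)⟨y − y₀, H(y − y₀)⟩. Then L_ρ(x, y₊, λ) ≤ L_ρ(x, y₀, λ) − s_H‖y₊ − y₀‖². -/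
/-!
Write `φ = L_ρ(x, ·, λ)`, which is convex in `y`, and `w = y₊ - y₀`. Testing the proximal problem
at `y₀ + t w` and using convexity of `φ` on the segment gives
`(1 - t) (φ y₊ - φ y₀) ≤ -(1 - t²) ⟪w, H w⟫ / 2` for `t ∈ [0, 1)`; dividing by `1 - t` and letting
`t → 1` yields `φ y₊ + ⟪w, H w⟫ ≤ φ y₀`, and `⟪w, H w⟫ ≥ s_H ‖w‖²`.
-/

open Matrix
open scoped RealInnerProductSpace

/-- The augmented Lagrangian `L_ρ(x, y, λ)` of the problem
`min F(x) + h(y)  s.t.  Ax + By = c`. -/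
noncomputable def augLag {n d p : ℕ} (F : EuclideanSpace ℝ (Fin n) → ℝ)
    (h : EuclideanSpace ℝ (Fin d) → ℝ) (A : Matrix (Fin p) (Fin n) ℝ)
    (B : Matrix (Fin p) (Fin d) ℝ) (c : EuclideanSpace ℝ (Fin p)) (ρ : ℝ)
    (x : EuclideanSpace ℝ (Fin n)) (y : EuclideanSpace ℝ (Fin d))
    (lam : EuclideanSpace ℝ (Fin p)) : ℝ :=
  F x + h y - ⟪lam, mvec A x + mvec B y - c⟫ + (ρ / 2) * ‖mvec A x + mvec B y - c‖ ^ 2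

open Set Filter Topology

theorem mvec_smul {m n : ℕ} (A : Matrix (Fin m) (Fin n) ℝ) (t : ℝ) (x : EuclideanSpace ℝ (Fin n)) :
    mvec A (t • x) = t • mvec A x :=
  map_smul (toEuclideanLin A) t x

section ProximalStep

variable {E : Type*} [AddCommGroup E] [Module ℝ E] {φ q : E → ℝ} {y₀ y : E}

theorem ConvexOn.add_one_add_mul_le_of_isMinOn (hφ : ConvexOn ℝ univ φ)
    (hq : ∀ (t : ℝ) w, q (t • w) = t ^ 2 * q w)
    (hmin : IsMinOn (fun y' ↦ φ y' + q (y' - y₀)) univ y) {t : ℝ} (ht₀ : 0 ≤ t) (ht₁ : t < 1) :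
    φ y + (1 + t) * q (y - y₀) ≤ φ y₀ := by
  have hseg : φ y + q (y - y₀) ≤ φ (y₀ + t • (y - y₀)) + t ^ 2 * q (y - y₀) := by
    simpa only [add_sub_cancel_left, hq] using isMinOn_univ_iff.1 hmin (y₀ + t • (y - y₀))
  have hconv : φ (y₀ + t • (y - y₀)) ≤ (1 - t) * φ y₀ + t * φ y := by
    rw [show y₀ + t • (y - y₀) = (1 - t) • y₀ + t • y by module]
    exact hφ.2 (mem_univ _) (mem_univ _) (by linarith) ht₀ (by ring)
  have hscaled : (φ y + (1 + t) * q (y - y₀) - φ y₀) * (1 - t) ≤ 0 := by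
    linear_combination hseg + hconv
  linarith [nonpos_of_mul_nonpos_left hscaled (by linarith)]

theorem ConvexOn.add_two_mul_le_of_isMinOn (hφ : ConvexOn ℝ univ φ)
    (hq : ∀ (t : ℝ) w, q (t • w) = t ^ 2 * q w)
    (hmin : IsMinOn (fun y' ↦ φ y' + q (y' - y₀)) univ y) :
    φ y + 2 * q (y - y₀) ≤ φ y₀ := by
  have hlim : Tendsto (fun t : ℝ ↦ φ y + (1 + t) * q (y - y₀)) (𝓝[<] 1)
      (𝓝 (φ y + 2 * q (y - y₀))) :=
    ((by fun_prop : Continuous fun t : ℝ ↦ φ y + (1 + t) * q (y - y₀)).tendsto' 1 _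
      (by norm_num)).mono_left nhdsWithin_le_nhds
  refine le_of_tendsto hlim ?_
  filter_upwards [Ioo_mem_nhdsLT zero_lt_one] with t ht
  exact hφ.add_one_add_mul_le_of_isMinOn hq hmin ht.1.le ht.2

end ProximalStep

theorem convexOn_neg_inner_add_mul_norm_sq {E F : Type*} [AddCommGroup E] [Module ℝ E]
    [NormedAddCommGroup F] [InnerProductSpace ℝ F] (g : E →ᵃ[ℝ] F) (lam : F) {ρ : ℝ}
    (hρ : 0 ≤ ρ) : ConvexOn ℝ univ fun y ↦ -⟪lam, g y⟫ + ρ / 2 * ‖g y‖ ^ 2 := by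
  have hP : ConvexOn ℝ univ fun z : F ↦ -⟪lam, z⟫ + ρ / 2 * ‖z‖ ^ 2 :=
    ((innerₛₗ ℝ lam).concaveOn convex_univ).neg.add
      (((convexOn_norm convex_univ).pow (fun _ _ ↦ norm_nonneg _) 2).smul (by positivity))
  exact hP.comp_affineMap g

theorem convexOn_augLag {n d p : ℕ} (F : EuclideanSpace ℝ (Fin n) → ℝ)
    {h : EuclideanSpace ℝ (Fin d) → ℝ} (hconv : ConvexOn ℝ univ h)
    (A : Matrix (Fin p) (Fin n) ℝ) (B : Matrix (Fin p) (Fin d) ℝ)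
    (c : EuclideanSpace ℝ (Fin p)) {ρ : ℝ} (hρ : 0 ≤ ρ) (x : EuclideanSpace ℝ (Fin n))
    (lam : EuclideanSpace ℝ (Fin p)) :
    ConvexOn ℝ univ fun y ↦ augLag F h A B c ρ x y lam := by
  let g : EuclideanSpace ℝ (Fin d) →ᵃ[ℝ] EuclideanSpace ℝ (Fin p) :=
    (toEuclideanLin B).toAffineMap + AffineMap.const ℝ _ (mvec A x - c)
  have hg : ∀ y, g y = mvec A x + mvec B y - c := fun y ↦ by
    change mvec B y + (mvec A x - c) = _
    abel
  have hsplit : (fun y ↦ augLag F h A B c ρ x y lam) =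
      (h + fun _ ↦ F x) + fun y ↦ -⟪lam, g y⟫ + ρ / 2 * ‖g y‖ ^ 2 := by
    funext y
    simp only [augLag, hg, Pi.add_apply]
    ring
  rw [hsplit]
  exact (hconv.add_const (F x)).add (convexOn_neg_inner_add_mul_norm_sq g lam hρ)

theorem stmt_4_general {n d p : ℕ} (F : EuclideanSpace ℝ (Fin n) → ℝ)
    (h : EuclideanSpace ℝ (Fin d) → ℝ) (hconv : ConvexOn ℝ Set.univ h)
    (A : Matrix (Fin p) (Fin n) ℝ) (B : Matrix (Fin p) (Fin d) ℝ)
    (c : EuclideanSpace ℝ (Fin p)) (ρ : ℝ) (hρ : 0 < ρ)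
    (H : Matrix (Fin d) (Fin d) ℝ)
    (sH : ℝ)
    (hH : ∀ w : EuclideanSpace ℝ (Fin d), sH * ‖w‖ ^ 2 ≤ ⟪w, mvec H w⟫)
    (x : EuclideanSpace ℝ (Fin n)) (lam : EuclideanSpace ℝ (Fin p))
    (y₀ yp : EuclideanSpace ℝ (Fin d))
    (hmin : ∀ y' : EuclideanSpace ℝ (Fin d),
      augLag F h A B c ρ x yp lam + (1 / 2) * ⟪yp - y₀, mvec H (yp - y₀)⟫ ≤
        augLag F h A B c ρ x y' lam + (1 / 2) * ⟪y' - y₀, mvec H (y' - y₀)⟫) :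
    augLag F h A B c ρ x yp lam ≤ augLag F h A B c ρ x y₀ lam - sH * ‖yp - y₀‖ ^ 2 := by
  have hq : ∀ (t : ℝ) (w : EuclideanSpace ℝ (Fin d)),
      1 / 2 * ⟪t • w, mvec H (t • w)⟫ = t ^ 2 * (1 / 2 * ⟪w, mvec H w⟫) := fun t w ↦ by
    rw [mvec_smul, real_inner_smul_left, real_inner_smul_right]
    ring
  have hdecrease := (convexOn_augLag F hconv A B c hρ.le x lam).add_two_mul_le_of_isMinOn
    (q := fun w ↦ 1 / 2 * ⟪w, mvec H w⟫) hq (isMinOn_univ_iff.2 hmin)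
  linarith [hH (yp - y₀)]

theorem stmt_4 {n d p : ℕ} (F : EuclideanSpace ℝ (Fin n) → ℝ)
    (h : EuclideanSpace ℝ (Fin d) → ℝ) (hconv : ConvexOn ℝ Set.univ h)
    (A : Matrix (Fin p) (Fin n) ℝ) (B : Matrix (Fin p) (Fin d) ℝ)
    (c : EuclideanSpace ℝ (Fin p)) (ρ : ℝ) (hρ : 0 < ρ)
    (H : Matrix (Fin d) (Fin d) ℝ) (hHsymm : H.IsSymm)
    (sH : ℝ) (hsH : 0 < sH)
    (hH : ∀ w : EuclideanSpace ℝ (Fin d), sH * ‖w‖ ^ 2 ≤ ⟪w, mvec H w⟫)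
    (x : EuclideanSpace ℝ (Fin n)) (lam : EuclideanSpace ℝ (Fin p))
    (y₀ yp : EuclideanSpace ℝ (Fin d))
    (hmin : ∀ y' : EuclideanSpace ℝ (Fin d),
      augLag F h A B c ρ x yp lam + (1 / 2) * ⟪yp - y₀, mvec H (yp - y₀)⟫ ≤
        augLag F h A B c ρ x y' lam + (1 / 2) * ⟪y' - y₀, mvec H (y' - y₀)⟫) :
    augLag F h A B c ρ x yp lam ≤ augLag F h A B c ρ x y₀ lam - sH * ‖yp - y₀‖ ^ 2 :=
  stmt_4_general F h hconv A B c ρ hρ H sH hH x lam y₀ yp hmin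
end

section
/- Let a ∈ (0,1], σ ≥ 0, L ≥ 0 and m > 0 be real numbers, and let (e_k)_{k≥0} and (d_k)_{k≥0} be sequences of nonnegative reals such that e_0 ≤ σ²/m and, for every k ≥ 1, e_k ≤ (1−a)²·e_{k−1} + 2a²σ² + 2L²(1−a)²·d_{k−1}. Then for every natural number K, Σ_{k=0}^{K} e_k ≤ σ²/(a m) + 2aσ²K + (2L²/a)·Σ_{k=0}^{K−1} d_k. -/
/-!
Summing the recursion and bounding the shifted partial sum by the full one, `S = Σ e` satisfies
`S ≤ e 0 + (1 - a)² S + 2a²σ²K + 2L²(1 - a)² Σ d`, and `1 - (1 - a)² ≥ a` turns this into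
`a S ≤ σ²/m + 2a²σ²K + 2L² Σ d`.
-/

open Finset

theorem one_sub_mul_sum_range_succ_le_of_le_mul_add {e b : ℕ → ℝ} {q : ℝ} (hq : 0 ≤ q)
    (he : ∀ k, 0 ≤ e k) (hrec : ∀ k, e (k + 1) ≤ q * e k + b k) (K : ℕ) :
    (1 - q) * ∑ k ∈ range (K + 1), e k ≤ e 0 + ∑ k ∈ range K, b k := by
  have hshift : ∑ k ∈ range K, e (k + 1) ≤ q * ∑ k ∈ range K, e k + ∑ k ∈ range K, b k := by
    rw [mul_sum, ← sum_add_distrib]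
    exact sum_le_sum fun k _ => hrec k
  have hprefix : q * ∑ k ∈ range K, e k ≤ q * ∑ k ∈ range (K + 1), e k := by
    rw [sum_range_succ]
    exact mul_le_mul_of_nonneg_left (le_add_of_nonneg_right (he K)) hq
  rw [sum_range_succ'] at hprefix ⊢
  linarith

theorem stmt_9_general (a σ L m : ℝ) (ha : a ∈ Set.Ioc (0 : ℝ) 1)
    (e d : ℕ → ℝ) (he : ∀ k, 0 ≤ e k) (hd : ∀ k, 0 ≤ d k)
    (he0 : e 0 ≤ σ ^ 2 / m)
    (hrec : ∀ k : ℕ, 1 ≤ k →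
      e k ≤ (1 - a) ^ 2 * e (k - 1) + 2 * a ^ 2 * σ ^ 2 + 2 * L ^ 2 * (1 - a) ^ 2 * d (k - 1))
    (K : ℕ) :
    ∑ k ∈ Finset.range (K + 1), e k ≤
      σ ^ 2 / (a * m) + 2 * a * σ ^ 2 * K + (2 * L ^ 2 / a) * ∑ k ∈ Finset.range K, d k := by
  obtain ⟨ha0, ha1⟩ := ha
  set S := ∑ k ∈ range (K + 1), e k
  set D := ∑ k ∈ range K, d k
  have hsum := one_sub_mul_sum_range_succ_le_of_le_mul_add (sq_nonneg (1 - a)) he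
    (b := fun k => 2 * a ^ 2 * σ ^ 2 + 2 * L ^ 2 * (1 - a) ^ 2 * d k)
    (fun k => by simpa [add_assoc] using hrec (k + 1) le_add_self) K
  rw [sum_add_distrib, sum_const, card_range, nsmul_eq_mul, ← mul_sum] at hsum
  have hS : a * S ≤ (1 - (1 - a) ^ 2) * S :=
    mul_le_mul_of_nonneg_right (by nlinarith) (sum_nonneg fun k _ => he k)
  have hD : 2 * L ^ 2 * (1 - a) ^ 2 * D ≤ 2 * L ^ 2 * D :=
    mul_le_mul_of_nonneg_right (mul_le_of_le_one_right (by positivity) (by nlinarith))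
      (sum_nonneg fun k _ => hd k)
  have haS : a * S ≤ σ ^ 2 / m + 2 * a ^ 2 * σ ^ 2 * K + 2 * L ^ 2 * D := by linarith
  calc S ≤ (σ ^ 2 / m + 2 * a ^ 2 * σ ^ 2 * K + 2 * L ^ 2 * D) / a := by
        rwa [le_div_iff₀ ha0, mul_comm]
    _ = σ ^ 2 / (a * m) + 2 * a * σ ^ 2 * K + (2 * L ^ 2 / a) * D := by
        field_simp

theorem stmt_9 (a σ L m : ℝ) (ha : a ∈ Set.Ioc (0 : ℝ) 1) (hσ : 0 ≤ σ) (hL : 0 ≤ L)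
    (hm : 0 < m) (e d : ℕ → ℝ) (he : ∀ k, 0 ≤ e k) (hd : ∀ k, 0 ≤ d k)
    (he0 : e 0 ≤ σ ^ 2 / m)
    (hrec : ∀ k : ℕ, 1 ≤ k →
      e k ≤ (1 - a) ^ 2 * e (k - 1) + 2 * a ^ 2 * σ ^ 2 + 2 * L ^ 2 * (1 - a) ^ 2 * d (k - 1))
    (K : ℕ) :
    ∑ k ∈ Finset.range (K + 1), e k ≤
      σ ^ 2 / (a * m) + 2 * a * σ ^ 2 * K + (2 * L ^ 2 / a) * ∑ k ∈ Finset.range K, d k :=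
  stmt_9_general a σ L m ha e d he hd he0 hrec K
end

section
/- Fix an integer K ≥ 1 and positive constants L, σ, σ_A, φ_min ≤ φ_max, and s_H. Define τ := φ_min²σ_A/(40φ_max²) + σ_A/2, c_a := max{ ((1+2L²)/2 + 20L²/σ_A)·(2/τ), 1 }, c_ρ := max{ (20L² + 2σ_A L)/(σ_A τ), 1 }, and set ρ := c_ρ·K^{1/3}, a := c_a²/ρ², η := φ_min ρ σ_A/(20 φ_max²). Assume a ≤ 1 and let m ≥ ρ be a real number. Let (ψ_k)_{0 ≤ k ≤ K+1} be reals bounded below by ψ_*, and let (e_k)_{k≥0}, (X_k)_{k≥0}, (Y_k)_{k≥0} be nonnegative reals, with the conventions e_{−1} := 0 and X_{−1} := 0, satisfying: (a) e_0 ≤ σ²/m; (b) e_k ≤ (1−a)²e_{k−1} + 2a²σ² + 2L²(1−a)²X_{k−1} for 1 ≤ k ≤ K; (c) for every 0 ≤ k ≤ K: ψ_{k+1} ≤ ψ_k + (c_a/(2ρ) + 5/(ρσ_A))·e_k + (5/(ρσ_A))·e_{k−1} − s_H·Y_k − (ηφ_min + σ_Aρ/2 − L/2 − ρ/(2c_a)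 − 5η²φ_max²/(ρσ_A))·X_k + (5(L² + η²φ_max²)/(ρσ_A))·X_{k−1}. Then Σ_{k=0}^{K} ( X_k + (4 s_H/(τρ))·Y_k ) ≤ (4(C₁ + ψ_0 − ψ_*)/(τ c_ρ))·K^{−1/3}, where C₁ := (c_a/2 + 10/σ_A)·(σ²/c_a² + 2c_a²σ²/c_ρ³). -/
/-- `prev f k` is `f (k-1)` with the convention `f (-1) = 0`. -/
def prev (f : ℕ → ℝ) : ℕ → ℝ := fun k => if k = 0 then 0 else f (k - 1)

/-!
Summing the descent inequality telescopes `ψ`; the lagged terms `prev e`, `prev X` are dominated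
by the unlagged sums, so `ψ (K+1) - ψ 0 ≤ (B + D) Σ e - s_H Σ Y - (Γ - P) Σ X`. Summing the
momentum recursion and using `(1 - a)² ≤ 1 - a` gives `a Σ e ≤ e₀ + 2a²σ²K + 2L² Σ X`, which
trades the estimator error for `Σ X` at the price of a noise term. With `a = c_a²/ρ²` and
`ρ³ = c_ρ³ K` the weighted noise term is exactly `C₁`, and the choice of `c_a`, `c_ρ` leaves a
margin of `τρ/4` in front of `Σ X`; dividing by `τρ/4 = τ c_ρ K^{1/3}/4` gives the rate.
-/

open Finset

theorem sum_range_succ_prev (f : ℕ → ℝ) (K : ℕ) :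
    ∑ k ∈ range (K + 1), prev f k = ∑ k ∈ range K, f k := by
  simp [sum_range_succ', prev]

theorem sum_range_le_sum_range_succ {f : ℕ → ℝ} (hf : ∀ k, 0 ≤ f k) (K : ℕ) :
    ∑ k ∈ range K, f k ≤ ∑ k ∈ range (K + 1), f k := by
  simpa [sum_range_succ] using hf K

theorem sub_le_of_descent {K : ℕ} {ψ e X Y : ℕ → ℝ} {B D s Γ P : ℝ}
    (hD : 0 ≤ D) (hP : 0 ≤ P) (he : ∀ k, 0 ≤ e k) (hX : ∀ k, 0 ≤ X k)
    (hdesc : ∀ k ≤ K, ψ (k + 1) ≤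
      ψ k + B * e k + D * prev e k - s * Y k - Γ * X k + P * prev X k) :
    ψ (K + 1) - ψ 0 ≤
      (B + D) * ∑ k ∈ range (K + 1), e k - s * ∑ k ∈ range (K + 1), Y k -
        (Γ - P) * ∑ k ∈ range (K + 1), X k := by
  have hsum : ψ (K + 1) - ψ 0 ≤ ∑ k ∈ range (K + 1),
      (B * e k + D * prev e k - s * Y k - Γ * X k + P * prev X k) := by
    rw [← sum_range_sub]
    exact sum_le_sum fun k hk => by linarith [hdesc k (Nat.lt_succ_iff.mp (mem_range.mp hk))]
  simp only [sum_add_distrib, sum_sub_distrib, ← mul_sum, sum_range_succ_prev] at hsum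
  have he' := mul_le_mul_of_nonneg_left (sum_range_le_sum_range_succ he K) hD
  have hX' := mul_le_mul_of_nonneg_left (sum_range_le_sum_range_succ hX K) hP
  linarith

theorem mul_sum_le_of_momentum_recursion {K : ℕ} {e X : ℕ → ℝ} {a b c : ℝ}
    (ha0 : 0 ≤ a) (ha1 : a ≤ 1) (hc : 0 ≤ c) (he : ∀ k, 0 ≤ e k) (hX : ∀ k, 0 ≤ X k)
    (hrec : ∀ k, 1 ≤ k → k ≤ K →
      e k ≤ (1 - a) ^ 2 * e (k - 1) + b + c * (1 - a) ^ 2 * X (k - 1)) :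
    a * ∑ k ∈ range (K + 1), e k ≤ e 0 + b * K + c * ∑ k ∈ range (K + 1), X k := by
  have hshift : ∑ k ∈ range K, e (k + 1) ≤
      (1 - a) ^ 2 * ∑ k ∈ range K, e k + b * K + c * (1 - a) ^ 2 * ∑ k ∈ range K, X k := by
    calc ∑ k ∈ range K, e (k + 1)
        ≤ ∑ k ∈ range K, ((1 - a) ^ 2 * e k + b + c * (1 - a) ^ 2 * X k) :=
          sum_le_sum fun k hk => by simpa using hrec (k + 1) (by omega) (mem_range.mp hk)
      _ = _ := by
        simp only [sum_add_distrib, ← mul_sum, sum_const, card_range, nsmul_eq_mul]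
        ring
  have hE := sum_range_le_sum_range_succ he K
  have hXK := sum_range_le_sum_range_succ hX K
  have hdamp : (1 - a) ^ 2 ≤ 1 - a := by nlinarith
  have hEdamp : (1 - a) ^ 2 * ∑ k ∈ range K, e k ≤ (1 - a) * ∑ k ∈ range (K + 1), e k :=
    mul_le_mul hdamp hE (sum_nonneg fun k _ => he k) (by linarith)
  have hXdamp : c * (1 - a) ^ 2 * ∑ k ∈ range K, X k ≤ c * 1 * ∑ k ∈ range (K + 1), X k := by
    gcongr
    · exact sum_nonneg fun k _ => hX k
    · nlinarith
  rw [sum_range_succ'] at hEdamp ⊢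
  linarith

theorem mul_rpow_one_third_pow {c x : ℝ} (hx : 0 ≤ x) :
    (c * x ^ ((1 : ℝ) / 3)) ^ 3 = c ^ 3 * x := by
  rw [mul_pow, ← Real.rpow_natCast (x ^ _), ← Real.rpow_mul hx]
  norm_num

section Constants

variable {L σ σA φmin φmax τ ca cρ ρ a η : ℝ}

theorem descent_coeff_sub_eq (hσA : σA ≠ 0) (hφmax : φmax ≠ 0) (hρ : ρ ≠ 0)
    (hτ : τ = φmin ^ 2 * σA / (40 * φmax ^ 2) + σA / 2)
    (hη : η = φmin * ρ * σA / (20 * φmax ^ 2)) :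
    (η * φmin + σA * ρ / 2 - L / 2 - ρ / (2 * ca) - 5 * η ^ 2 * φmax ^ 2 / (ρ * σA)) -
        5 * (L ^ 2 + η ^ 2 * φmax ^ 2) / (ρ * σA) =
      τ * ρ - L / 2 - ρ / (2 * ca) - 5 * L ^ 2 / (ρ * σA) := by
  subst hτ hη
  field_simp
  ring

theorem momentum_cost_le (hσA : 0 < σA) (hτ : 0 < τ) (hρ : 0 < ρ) (hca1 : 1 ≤ ca)
    (hca : ((1 + 2 * L ^ 2) / 2 + 20 * L ^ 2 / σA) * (2 / τ) ≤ ca) (ha : a = ca ^ 2 / ρ ^ 2) :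
    ρ / (2 * ca) + (ca / (2 * ρ) + 5 / (ρ * σA) + 5 / (ρ * σA)) / a * (2 * L ^ 2) ≤
      τ * ρ / 2 := by
  have hca0 : 0 < ca := by linarith
  have hM : ((1 + 2 * L ^ 2) / 2 + 20 * L ^ 2 / σA) * 2 ≤ ca * τ := by
    rwa [mul_div_assoc', div_le_iff₀ hτ] at hca
  calc ρ / (2 * ca) + (ca / (2 * ρ) + 5 / (ρ * σA) + 5 / (ρ * σA)) / a * (2 * L ^ 2)
      = ρ / (2 * ca) + L ^ 2 * ρ / ca + 20 * L ^ 2 / σA * ρ / ca ^ 2 := by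
        subst ha; field_simp; ring
    _ ≤ ρ / (2 * ca) + L ^ 2 * ρ / ca + 20 * L ^ 2 / σA * ρ / ca := by
        gcongr
        nlinarith
    _ = ((1 + 2 * L ^ 2) / 2 + 20 * L ^ 2 / σA) * 2 * ρ / (2 * ca) := by field_simp
    _ ≤ ca * τ * ρ / (2 * ca) := by gcongr
    _ = τ * ρ / 2 := by field_simp

theorem smoothness_cost_le (hσA : 0 < σA) (hτ : 0 < τ)
    (hcρ : (20 * L ^ 2 + 2 * σA * L) / (σA * τ) ≤ cρ) (hcρρ : cρ ≤ ρ) (hρ : 1 ≤ ρ) :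
    L / 2 + 5 * L ^ 2 / (ρ * σA) ≤ τ * ρ / 4 := by
  have hcρ' : 20 * L ^ 2 + 2 * σA * L ≤ cρ * (σA * τ) :=
    (div_le_iff₀ (by positivity)).mp hcρ
  calc L / 2 + 5 * L ^ 2 / (ρ * σA)
      ≤ L / 2 + 5 * L ^ 2 / σA := by
        have hσAρ : σA ≤ ρ * σA := le_mul_of_one_le_left hσA.le hρ
        gcongr
    _ = (20 * L ^ 2 + 2 * σA * L) / σA / 4 := by field_simp; ring
    _ ≤ cρ * τ / 4 := by gcongr; rw [div_le_iff₀ hσA]; linarith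
    _ ≤ τ * ρ / 4 := by nlinarith

theorem noise_weight_eq {K : ℝ} (hσA : σA ≠ 0) (hca : ca ≠ 0) (hcρ : cρ ≠ 0) (hρ : ρ ≠ 0)
    (hK : ρ ^ 3 = cρ ^ 3 * K) (ha : a = ca ^ 2 / ρ ^ 2) :
    (ca / (2 * ρ) + 5 / (ρ * σA) + 5 / (ρ * σA)) / a * (σ ^ 2 / ρ + 2 * a ^ 2 * σ ^ 2 * K) =
      (ca / 2 + 10 / σA) * (σ ^ 2 / ca ^ 2 + 2 * ca ^ 2 * σ ^ 2 / cρ ^ 3) := by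
  have hK' : K = ρ ^ 3 / cρ ^ 3 := by field_simp; linarith
  subst ha hK'
  field_simp
  ring

theorem descent_margin (hσA : 0 < σA) (hφmax : φmax ≠ 0)
    (hτ : τ = φmin ^ 2 * σA / (40 * φmax ^ 2) + σA / 2)
    (hη : η = φmin * ρ * σA / (20 * φmax ^ 2)) (hca1 : 1 ≤ ca)
    (hca : ((1 + 2 * L ^ 2) / 2 + 20 * L ^ 2 / σA) * (2 / τ) ≤ ca) (hcρ1 : 1 ≤ cρ)
    (hcρ : (20 * L ^ 2 + 2 * σA * L) / (σA * τ) ≤ cρ) (hcρρ : cρ ≤ ρ)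
    (ha : a = ca ^ 2 / ρ ^ 2) :
    τ * ρ / 4 ≤
      (η * φmin + σA * ρ / 2 - L / 2 - ρ / (2 * ca) - 5 * η ^ 2 * φmax ^ 2 / (ρ * σA)) -
        5 * (L ^ 2 + η ^ 2 * φmax ^ 2) / (ρ * σA) -
        (ca / (2 * ρ) + 5 / (ρ * σA) + 5 / (ρ * σA)) / a * (2 * L ^ 2) := by
  have hτ0 : 0 < τ := hτ ▸ by positivity
  have hρ0 : 0 < ρ := by linarith
  rw [descent_coeff_sub_eq hσA.ne' hφmax hρ0.ne' hτ hη]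
  linarith [momentum_cost_le hσA hτ0 hρ0 hca1 hca ha,
    smoothness_cost_le hσA hτ0 hcρ hcρρ (hcρ1.trans hcρρ)]

end Constants

theorem add_le_of_descent_of_error_bound {Δ W a c N G μ s SE SX SY : ℝ}
    (hdesc : Δ ≤ W * SE - s * SY - G * SX) (herr : a * SE ≤ N + c * SX) (ha : 0 < a)
    (hW : 0 ≤ W) (hμ : μ ≤ G - W / a * c) (hSX : 0 ≤ SX) :
    μ * SX + s * SY ≤ -Δ + W / a * N := by
  have hWSE : W * SE ≤ W / a * N + W / a * c * SX := by
    have h := mul_le_mul_of_nonneg_left herr (div_nonneg hW ha.le)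
    rwa [← mul_assoc, div_mul_cancel₀ _ ha.ne', mul_add, ← mul_assoc] at h
  nlinarith [mul_le_mul_of_nonneg_right hμ hSX]

theorem stmt_10_general (K : ℕ) (hK : 1 ≤ K)
    (L σ σA φmin φmax sH : ℝ)
    (hσA : 0 < σA) (hφmin : 0 < φmin)
    (hφ : φmin ≤ φmax)
    (τ ca cρ ρ a η C₁ : ℝ)
    (hτ : τ = φmin ^ 2 * σA / (40 * φmax ^ 2) + σA / 2)
    (hca : ca = max (((1 + 2 * L ^ 2) / 2 + 20 * L ^ 2 / σA) * (2 / τ)) 1)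
    (hcρ : cρ = max ((20 * L ^ 2 + 2 * σA * L) / (σA * τ)) 1)
    (hρ : ρ = cρ * (K : ℝ) ^ ((1 : ℝ) / 3))
    (haeq : a = ca ^ 2 / ρ ^ 2)
    (hηeq : η = φmin * ρ * σA / (20 * φmax ^ 2))
    (ha1 : a ≤ 1)
    (m : ℝ) (hm : ρ ≤ m)
    (hC₁ : C₁ = (ca / 2 + 10 / σA) * (σ ^ 2 / ca ^ 2 + 2 * ca ^ 2 * σ ^ 2 / cρ ^ 3))
    (ψ : ℕ → ℝ) (ψstar : ℝ) (hψ : ∀ k ≤ K + 1, ψstar ≤ ψ k)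
    (e X Y : ℕ → ℝ) (he : ∀ k, 0 ≤ e k) (hX : ∀ k, 0 ≤ X k)
    (he0 : e 0 ≤ σ ^ 2 / m)
    (hrec : ∀ k, 1 ≤ k → k ≤ K →
      e k ≤ (1 - a) ^ 2 * e (k - 1) + 2 * a ^ 2 * σ ^ 2 + 2 * L ^ 2 * (1 - a) ^ 2 * X (k - 1))
    (hdesc : ∀ k ≤ K,
      ψ (k + 1) ≤ ψ k + (ca / (2 * ρ) + 5 / (ρ * σA)) * e k + (5 / (ρ * σA)) * prev e k -
        sH * Y k -
        (η * φmin + σA * ρ / 2 - L / 2 - ρ / (2 * ca) - 5 * η ^ 2 * φmax ^ 2 / (ρ * σA)) * X k +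
        (5 * (L ^ 2 + η ^ 2 * φmax ^ 2) / (ρ * σA)) * prev X k) :
    ∑ k ∈ Finset.range (K + 1), (X k + (4 * sH / (τ * ρ)) * Y k) ≤
      (4 * (C₁ + ψ 0 - ψstar) / (τ * cρ)) * (K : ℝ) ^ (-(1 : ℝ) / 3) := by
  have hφmax : 0 < φmax := hφmin.trans_le hφ
  have hτ0 : 0 < τ := hτ ▸ by positivity
  have hca1 : 1 ≤ ca := hca ▸ le_max_right _ _
  have hcρ1 : 1 ≤ cρ := hcρ ▸ le_max_right _ _
  have hcρρ : cρ ≤ ρ := hρ ▸ le_mul_of_one_le_right (by linarith)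
    (Real.one_le_rpow (by exact_mod_cast hK) (by norm_num))
  have hρ0 : 0 < ρ := by linarith
  have ha0 : 0 < a := haeq ▸ by positivity
  have he0ρ : e 0 ≤ σ ^ 2 / ρ := he0.trans (div_le_div_of_nonneg_left (sq_nonneg σ) hρ0 hm)
  have herr : a * ∑ k ∈ range (K + 1), e k ≤
      (σ ^ 2 / ρ + 2 * a ^ 2 * σ ^ 2 * K) + 2 * L ^ 2 * ∑ k ∈ range (K + 1), X k := by
    linarith [mul_sum_le_of_momentum_recursion ha0.le ha1 (by positivity) he hX hrec]
  have hbound := add_le_of_descent_of_error_bound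
    (sub_le_of_descent (by positivity) (by positivity) he hX hdesc) herr ha0 (by positivity)
    (descent_margin hσA hφmax.ne' hτ hηeq hca1 (hca ▸ le_max_left _ _) hcρ1
      (hcρ ▸ le_max_left _ _) hcρρ haeq) (sum_nonneg fun k _ => hX k)
  rw [noise_weight_eq hσA.ne' (by positivity) (by positivity) hρ0.ne'
    (hρ ▸ mul_rpow_one_third_pow (Nat.cast_nonneg K)) haeq, ← hC₁] at hbound
  have hKρ : (K : ℝ) ^ (-(1 : ℝ) / 3) = cρ / ρ := by
    rw [neg_div, Real.rpow_neg (Nat.cast_nonneg K), hρ]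
    field_simp
  calc ∑ k ∈ range (K + 1), (X k + (4 * sH / (τ * ρ)) * Y k)
      = 4 / (τ * ρ) *
          (τ * ρ / 4 * ∑ k ∈ range (K + 1), X k + sH * ∑ k ∈ range (K + 1), Y k) := by
        rw [sum_add_distrib, ← mul_sum]
        field_simp
    _ ≤ 4 / (τ * ρ) * (C₁ + ψ 0 - ψstar) := by
        gcongr
        linarith [hψ (K + 1) le_rfl]
    _ = _ := by
        rw [hKρ]
        field_simp

theorem stmt_10 (K : ℕ) (hK : 1 ≤ K)
    (L σ σA φmin φmax sH : ℝ)
    (hL : 0 < L) (hσ : 0 < σ) (hσA : 0 < σA) (hφmin : 0 < φmin)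
    (hφ : φmin ≤ φmax) (hsH : 0 < sH)
    (τ ca cρ ρ a η C₁ : ℝ)
    (hτ : τ = φmin ^ 2 * σA / (40 * φmax ^ 2) + σA / 2)
    (hca : ca = max (((1 + 2 * L ^ 2) / 2 + 20 * L ^ 2 / σA) * (2 / τ)) 1)
    (hcρ : cρ = max ((20 * L ^ 2 + 2 * σA * L) / (σA * τ)) 1)
    (hρ : ρ = cρ * (K : ℝ) ^ ((1 : ℝ) / 3))
    (haeq : a = ca ^ 2 / ρ ^ 2)
    (hηeq : η = φmin * ρ * σA / (20 * φmax ^ 2))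
    (ha1 : a ≤ 1)
    (m : ℝ) (hm : ρ ≤ m)
    (hC₁ : C₁ = (ca / 2 + 10 / σA) * (σ ^ 2 / ca ^ 2 + 2 * ca ^ 2 * σ ^ 2 / cρ ^ 3))
    (ψ : ℕ → ℝ) (ψstar : ℝ) (hψ : ∀ k ≤ K + 1, ψstar ≤ ψ k)
    (e X Y : ℕ → ℝ) (he : ∀ k, 0 ≤ e k) (hX : ∀ k, 0 ≤ X k) (hY : ∀ k, 0 ≤ Y k)
    (he0 : e 0 ≤ σ ^ 2 / m)
    (hrec : ∀ k, 1 ≤ k → k ≤ K →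
      e k ≤ (1 - a) ^ 2 * e (k - 1) + 2 * a ^ 2 * σ ^ 2 + 2 * L ^ 2 * (1 - a) ^ 2 * X (k - 1))
    (hdesc : ∀ k ≤ K,
      ψ (k + 1) ≤ ψ k + (ca / (2 * ρ) + 5 / (ρ * σA)) * e k + (5 / (ρ * σA)) * prev e k -
        sH * Y k -
        (η * φmin + σA * ρ / 2 - L / 2 - ρ / (2 * ca) - 5 * η ^ 2 * φmax ^ 2 / (ρ * σA)) * X k +
        (5 * (L ^ 2 + η ^ 2 * φmax ^ 2) / (ρ * σA)) * prev X k) :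
    ∑ k ∈ Finset.range (K + 1), (X k + (4 * sH / (τ * ρ)) * Y k) ≤
      (4 * (C₁ + ψ 0 - ψstar) / (τ * cρ)) * (K : ℝ) ^ (-(1 : ℝ) / 3) :=
  stmt_10_general K hK L σ σA φmin φmax sH hσA hφmin hφ τ ca cρ ρ a η C₁ hτ hca hcρ hρ haeq hηeq ha1
    m hm hC₁ ψ ψstar hψ e X Y he hX he0 hrec hdesc
end

section
/- For F : ℝⁿ → ℝ, h : ℝᵈ → ℝ, matrices A ∈ ℝ^{p×n}, B ∈ ℝ^{p×d}, c ∈ ℝᵖ and ρ > 0, let L_ρ(x,y,λ) = F(x) + h(y) − ⟨λ, Ax + By − c⟩ + (ρ/2)‖Ax + By − c‖². Fix x ∈ ℝⁿ, y ∈ ℝᵈ, λ_prev ∈ ℝᵖ, and suppose λ = λ_prev − ρ(Ax + By − c). Then for every ρ′ > 0, L_{ρ′}(x, y, λ) = L_ρ(x, y, λ_prev) + (1/ρ)·‖λ − λ_prev‖² + ((ρ′ − ρ)/(2ρ²))·‖λ − λ_prev‖². In particular, if ρ′ ≥ ρ and one replaces the last term's exact value by an upper bound, L_{ρ′}(x,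 y, λ) ≤ L_ρ(x, y, λ_prev) + (1/ρ + (ρ′ − ρ)/(2ρ²))·‖λ − λ_prev‖². -/
open Matrix
open scoped RealInnerProductSpace

section InnerProductSpace

variable {E : Type*} [NormedAddCommGroup E] [InnerProductSpace ℝ E]

theorem norm_smul_sq_real (ρ : ℝ) (r : E) : ‖ρ • r‖ ^ 2 = ρ ^ 2 * ‖r‖ ^ 2 := by
  rw [norm_smul, mul_pow, Real.norm_eq_abs, sq_abs]

theorem real_inner_smul_self_left_eq_inv_mul_norm_sq {ρ : ℝ} (hρ : ρ ≠ 0) (r : E) :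
    ⟪ρ • r, r⟫ = (1 / ρ) * ‖ρ • r‖ ^ 2 := by
  rw [real_inner_smul_left, real_inner_self_eq_norm_sq, norm_smul_sq_real]
  field_simp

end InnerProductSpace

section AugmentedLagrangian

variable {n d p : ℕ} (F : EuclideanSpace ℝ (Fin n) → ℝ) (h : EuclideanSpace ℝ (Fin d) → ℝ)
  (A : Matrix (Fin p) (Fin n) ℝ) (B : Matrix (Fin p) (Fin d) ℝ) (c : EuclideanSpace ℝ (Fin p))
  (x : EuclideanSpace ℝ (Fin n)) (y : EuclideanSpace ℝ (Fin d))

theorem augLag_sub_augLag_multiplier (ρ : ℝ) (lam lam' : EuclideanSpace ℝ (Fin p)) :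
    augLag F h A B c ρ x y lam - augLag F h A B c ρ x y lam' =
      ⟪lam' - lam, mvec A x + mvec B y - c⟫ := by
  rw [augLag, augLag, inner_sub_left]
  ring

theorem augLag_sub_augLag_penalty (ρ ρ' : ℝ) (lam : EuclideanSpace ℝ (Fin p)) :
    augLag F h A B c ρ' x y lam - augLag F h A B c ρ x y lam =
      (ρ' - ρ) / 2 * ‖mvec A x + mvec B y - c‖ ^ 2 := by
  rw [augLag, augLag]
  ring

variable {ρ : ℝ} {lamPrev lam : EuclideanSpace ℝ (Fin p)}

theorem augLag_dual_ascent (hρ : ρ ≠ 0)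
    (hlam : lam = lamPrev - ρ • (mvec A x + mvec B y - c)) :
    augLag F h A B c ρ x y lam =
      augLag F h A B c ρ x y lamPrev + (1 / ρ) * ‖lam - lamPrev‖ ^ 2 := by
  have hstep := augLag_sub_augLag_multiplier F h A B c x y ρ lam lamPrev
  rw [hlam, sub_sub_cancel, real_inner_smul_self_left_eq_inv_mul_norm_sq hρ] at hstep
  rw [hlam, sub_sub_cancel_left, norm_neg]
  linarith

theorem augLag_penalty_increase (hρ : ρ ≠ 0)
    (hlam : lam = lamPrev - ρ • (mvec A x + mvec B y - c)) (ρ' : ℝ) :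
    augLag F h A B c ρ' x y lam =
      augLag F h A B c ρ x y lam + (ρ' - ρ) / (2 * ρ ^ 2) * ‖lam - lamPrev‖ ^ 2 := by
  have hstep := augLag_sub_augLag_penalty F h A B c x y ρ ρ' lam
  have hnorm : ‖lam - lamPrev‖ ^ 2 = ρ ^ 2 * ‖mvec A x + mvec B y - c‖ ^ 2 := by
    rw [hlam, sub_sub_cancel_left, norm_neg, norm_smul_sq_real]
  rw [hnorm]
  field_simp
  linarith

end AugmentedLagrangian

theorem stmt_11 {n d p : ℕ} (F : EuclideanSpace ℝ (Fin n) → ℝ)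
    (h : EuclideanSpace ℝ (Fin d) → ℝ)
    (A : Matrix (Fin p) (Fin n) ℝ) (B : Matrix (Fin p) (Fin d) ℝ)
    (c : EuclideanSpace ℝ (Fin p)) (ρ : ℝ) (hρ : 0 < ρ)
    (x : EuclideanSpace ℝ (Fin n)) (y : EuclideanSpace ℝ (Fin d))
    (lamPrev lam : EuclideanSpace ℝ (Fin p))
    (hlam : lam = lamPrev - ρ • (mvec A x + mvec B y - c)) :
    ∀ ρ' : ℝ, 0 < ρ' →
      (augLag F h A B c ρ' x y lam =
        augLag F h A B c ρ x y lamPrev + (1 / ρ) * ‖lam - lamPrev‖ ^ 2 +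
          ((ρ' - ρ) / (2 * ρ ^ 2)) * ‖lam - lamPrev‖ ^ 2) ∧
      (ρ ≤ ρ' →
        augLag F h A B c ρ' x y lam ≤
          augLag F h A B c ρ x y lamPrev +
            (1 / ρ + (ρ' - ρ) / (2 * ρ ^ 2)) * ‖lam - lamPrev‖ ^ 2) := by
  intro ρ' _
  have hexact : augLag F h A B c ρ' x y lam =
      augLag F h A B c ρ x y lamPrev + (1 / ρ) * ‖lam - lamPrev‖ ^ 2 +
        ((ρ' - ρ) / (2 * ρ ^ 2)) * ‖lam - lamPrev‖ ^ 2 := by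
    rw [augLag_penalty_increase F h A B c x y hρ.ne' hlam ρ',
      augLag_dual_ascent F h A B c x y hρ.ne' hlam]
  refine ⟨hexact, fun _ => le_of_eq ?_⟩
  rw [hexact, add_mul, add_assoc]
end

section
/- Let g : ℝⁿ → ℝ be differentiable with L-Lipschitz gradient ∇g, where 0 ≤ L ≤ 1. Then for all y, z ∈ ℝⁿ: g(z) − (1/2)‖∇g(z)‖² + (1/2)‖z − ∇g(z) − y‖² ≥ g(y) + ((1−L)/2)·‖z − y‖². In particular the function z ↦ g(z) − (1/2)‖∇g(z)‖² + (1/2)‖z − ∇g(z) − y‖² attains its minimum value g(y) at z = y, and if L < 1 this minimizer is unique. -/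
/-!
By the descent lemma, `g y ≤ g z + ⟪∇g z, y - z⟫ + (L / 2) ‖y - z‖²`, while expanding the square
gives `g z - ½‖∇g z‖² + ½‖z - ∇g z - y‖² = g z + ⟪∇g z, y - z⟫ + ½‖y - z‖²`; subtracting yields the
inequality. At `z = y` the objective is `g y`, and for `L < 1` any `z` attaining `g y` has
`(1 - L) / 2 · ‖z - y‖² ≤ 0`.
-/

open InnerProductSpace

section Descent

variable {E : Type*} [NormedAddCommGroup E] [NormedSpace ℝ E] {f : E → ℝ} {f' : E → E →L[ℝ] ℝ}
  {L : ℝ}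

/-- The descent lemma. -/
theorem image_le_tangent_add_sq_of_lipschitz_fderiv (hf : ∀ x, HasFDerivAt f (f' x) x)
    (hlip : ∀ x y, ‖f' x - f' y‖ ≤ L * ‖x - y‖) (x y : E) :
    f y ≤ f x + f' x (y - x) + L / 2 * ‖y - x‖ ^ 2 := by
  set v := y - x
  -- `ψ` is `f` along the segment minus the claimed upper bound; it is antitone on `[0, ∞)`.
  let ψ : ℝ → ℝ := fun t => f (x + t • v) - t * f' x v - t ^ 2 * (L / 2 * ‖v‖ ^ 2)
  let ψ' : ℝ → ℝ := fun t => (f' (x + t • v) - f' x) v - t * (L * ‖v‖ ^ 2)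
  have hψ : ∀ t, HasDerivAt ψ (ψ' t) t := by
    intro t
    have hseg : HasDerivAt (fun t : ℝ => x + t • v) v t := by
      simpa using ((hasDerivAt_id t).smul_const v).const_add x
    have := (((hf _).comp_hasDerivAt t hseg).sub ((hasDerivAt_id t).mul_const (f' x v))).sub
      ((hasDerivAt_pow 2 t).mul_const (L / 2 * ‖v‖ ^ 2))
    refine this.congr_deriv ?_
    simp only [ψ', sub_apply, one_mul]
    push_cast
    ring
  have hψ'_nonpos : ∀ t, 0 ≤ t → ψ' t ≤ 0 := by
    intro t ht
    have hbound : (f' (x + t • v) - f' x) v ≤ t * (L * ‖v‖ ^ 2) :=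
      calc (f' (x + t • v) - f' x) v ≤ ‖f' (x + t • v) - f' x‖ * ‖v‖ :=
            (le_abs_self _).trans ((f' (x + t • v) - f' x).le_opNorm v)
        _ ≤ L * ‖(x + t • v) - x‖ * ‖v‖ := by gcongr; exact hlip _ _
        _ = t * (L * ‖v‖ ^ 2) := by
            rw [add_sub_cancel_left, norm_smul, Real.norm_of_nonneg ht]
            ring
    simp only [ψ']
    linarith
  have hanti : AntitoneOn ψ (Set.Ici 0) := by
    refine antitoneOn_of_hasDerivWithinAt_nonpos (convex_Ici 0)
      (fun t _ => (hψ t).continuousAt.continuousWithinAt)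
      (fun t _ => (hψ t).hasDerivWithinAt) fun t ht => hψ'_nonpos t ?_
    rw [interior_Ici] at ht
    exact ht.le
  have hψ_le := hanti (Set.mem_Ici.2 le_rfl) (Set.mem_Ici.2 zero_le_one) zero_le_one
  simp only [ψ, zero_smul, add_zero, one_smul, zero_mul, one_mul, sub_zero, ne_eq,
    OfNat.ofNat_ne_zero, not_false_eq_true, zero_pow, one_pow, v, add_sub_cancel] at hψ_le
  linarith

end Descent

section GradientStep

variable {F : Type*} [NormedAddCommGroup F] [InnerProductSpace ℝ F] [CompleteSpace F]
  {g : F → ℝ} {gradg : F → F} {L : ℝ}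

theorem image_le_add_inner_add_sq_of_lipschitz_gradient (hg : ∀ x, HasGradientAt g (gradg x) x)
    (hlip : ∀ x y, ‖gradg x - gradg y‖ ≤ L * ‖x - y‖) (x y : F) :
    g y ≤ g x + ⟪gradg x, y - x⟫_ℝ + L / 2 * ‖y - x‖ ^ 2 :=
  image_le_tangent_add_sq_of_lipschitz_fderiv (f' := fun x => toDual ℝ F (gradg x))
    (fun x => (hg x).hasFDerivAt)
    (fun x y => by rw [← map_sub, LinearIsometryEquiv.norm_map]; exact hlip x y) x y

theorem add_sq_le_gradStep_objective (hg : ∀ x, HasGradientAt g (gradg x) x)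
    (hlip : ∀ x y, ‖gradg x - gradg y‖ ≤ L * ‖x - y‖) (y z : F) :
    g y + ((1 - L) / 2) * ‖z - y‖ ^ 2 ≤
      g z - (1 / 2) * ‖gradg z‖ ^ 2 + (1 / 2) * ‖z - gradg z - y‖ ^ 2 := by
  have hdescent := image_le_add_inner_add_sq_of_lipschitz_gradient hg hlip z y
  have hexpand : ‖z - gradg z - y‖ ^ 2 = ‖y - z‖ ^ 2 + 2 * ⟪y - z, gradg z⟫_ℝ + ‖gradg z‖ ^ 2 := by
    rw [show z - gradg z - y = -((y - z) + gradg z) by abel, norm_neg, norm_add_sq_real]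
  rw [hexpand, norm_sub_rev z y, real_inner_comm]
  linarith

end GradientStep

theorem stmt_12_general {n : ℕ} (g : EuclideanSpace ℝ (Fin n) → ℝ)
    (gradg : EuclideanSpace ℝ (Fin n) → EuclideanSpace ℝ (Fin n))
    (hgrad : ∀ x, HasGradientAt g (gradg x) x)
    (L : ℝ)
    (hlip : ∀ x x', ‖gradg x - gradg x'‖ ≤ L * ‖x - x'‖) :
    (∀ y z : EuclideanSpace ℝ (Fin n),
      g y + ((1 - L) / 2) * ‖z - y‖ ^ 2 ≤
        g z - (1 / 2) * ‖gradg z‖ ^ 2 + (1 / 2) * ‖z - gradg z - y‖ ^ 2) ∧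
    (∀ y : EuclideanSpace ℝ (Fin n),
      g y - (1 / 2) * ‖gradg y‖ ^ 2 + (1 / 2) * ‖y - gradg y - y‖ ^ 2 = g y) ∧
    (L < 1 → ∀ y z : EuclideanSpace ℝ (Fin n),
      g z - (1 / 2) * ‖gradg z‖ ^ 2 + (1 / 2) * ‖z - gradg z - y‖ ^ 2 = g y → z = y) := by
  refine ⟨add_sq_le_gradStep_objective hgrad hlip, fun y => ?_, fun hL y z heq => ?_⟩
  · rw [sub_sub_cancel_left, norm_neg]
    ring
  · have hle := add_sq_le_gradStep_objective hgrad hlip y z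
    rw [heq] at hle
    have hsq : ‖z - y‖ ^ 2 ≤ 0 :=
      nonpos_of_mul_nonpos_right (by linarith) (by linarith : 0 < (1 - L) / 2)
    rw [← sub_eq_zero, ← norm_eq_zero, ← sq_eq_zero_iff]
    exact le_antisymm hsq (sq_nonneg _)

theorem stmt_12 {n : ℕ} (g : EuclideanSpace ℝ (Fin n) → ℝ)
    (gradg : EuclideanSpace ℝ (Fin n) → EuclideanSpace ℝ (Fin n))
    (hgrad : ∀ x, HasGradientAt g (gradg x) x)
    (L : ℝ) (hL0 : 0 ≤ L) (hL1 : L ≤ 1)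
    (hlip : ∀ x x', ‖gradg x - gradg x'‖ ≤ L * ‖x - x'‖) :
    (∀ y z : EuclideanSpace ℝ (Fin n),
      g y + ((1 - L) / 2) * ‖z - y‖ ^ 2 ≤
        g z - (1 / 2) * ‖gradg z‖ ^ 2 + (1 / 2) * ‖z - gradg z - y‖ ^ 2) ∧
    (∀ y : EuclideanSpace ℝ (Fin n),
      g y - (1 / 2) * ‖gradg y‖ ^ 2 + (1 / 2) * ‖y - gradg y - y‖ ^ 2 = g y) ∧
    (L < 1 → ∀ y z : EuclideanSpace ℝ (Fin n),
      g z - (1 / 2) * ‖gradg z‖ ^ 2 + (1 / 2) * ‖z - gradg z - y‖ ^ 2 = g y → z = y) :=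
  stmt_12_general g gradg hgrad L hlip
end
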